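/- Theorem 4.1(b). Let {(P_1^{(j)},…,P_m^{(j)})}_{j≥0} be generated by the Gauss–Seidel NPDo iteration as in the context. Let 𝕀 ⊆ ℕ be infinite such that, as 𝕀 ∋ j → ∞ (convergence in Frobenius norm), P_ℓ^{(j)} → P_{*ℓ} for every 1 ≤ ℓ ≤ m and P_ℓ^{(j+1)} → P̂_{*ℓ} for every 1 ≤ ℓ ≤ m−1. For 1 ≤ ℓ ≤ m set ℋ̂_{*ℓ} := ℋ_ℓ(P̂_{*1},…,P̂_{*,ℓ−1}, P_{*ℓ}, P_{*,ℓ+1},…,P_{*m}) (so ℋ̂_{*1} = ℋ_1(P_{*1},…,P_{*m})). Then for every 1 ≤ ℓ ≤ m: ℋ̂_{*ℓ} = P_{*ℓ}·Λ_{*ℓ} where Λ_{*ℓ} := (P_{*ℓ})^H ℋ̂_{*ℓ} is Hermitian positive semidefinite. Consequently, if in addition P̂_{*ℓ} = P_{*ℓ} for all 1 ≤ ℓ ≤ m−1, then the KKT condition holds: for every 1 ≤ ℓ ≤ m, ℋ_ℓ(P_{*1},…,P_{*m}) = P_{*ℓ}·((P_{*ℓ})^H ℋ_ℓ(P_{*1},…,P_{*m}))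 with (P_{*ℓ})^H ℋ_ℓ(P_{*1},…,P_{*m}) Hermitian positive semidefinite. -/

import Mathlib

open Matrix Filter Topology
open scoped ComplexOrder Classical

/-- The entries of the multi-mode product `B ×₁ P₁ᴴ ×₂ ⋯ ×ₘ Pₘᴴ` of an `m`-mode tensor
`B` of size `n 0 × ⋯ × n (m-1)` with the conjugate transposes of the matrices `P ℓ`.
The column index set of `P ℓ` is `(s : Fin t) × Fin (κ ℓ s)`, encoding the partition of
`k ℓ = Σ s, κ ℓ s` into `t` blocks (block `s` has the indices with first component `s`). -/
noncomputable def multiProd {m t : ℕ} {n : Fin m → ℕ} {κ : Fin m → Fin t → ℕ}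
    (B : (∀ ℓ, Fin (n ℓ)) → ℂ)
    (P : ∀ ℓ, Matrix (Fin (n ℓ)) ((s : Fin t) × Fin (κ ℓ s)) ℂ) :
    (∀ ℓ, (s : Fin t) × Fin (κ ℓ s)) → ℂ :=
  fun i => ∑ j : ∀ ℓ, Fin (n ℓ), (∏ ℓ, star (P ℓ (j ℓ) (i ℓ))) * B j

/-- The block-diagonal objective
`f(P₁,…,Pₘ) = ‖BDiag(B ×₁ P₁ᴴ ×₂ ⋯ ×ₘ Pₘᴴ)‖_F²`: the sum of `|T(i)|²` over all
multi-indices `i` whose components all lie in the same diagonal block. -/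
noncomputable def fObj {m t : ℕ} {n : Fin m → ℕ} {κ : Fin m → Fin t → ℕ}
    (B : (∀ ℓ, Fin (n ℓ)) → ℂ)
    (P : ∀ ℓ, Matrix (Fin (n ℓ)) ((s : Fin t) × Fin (κ ℓ s)) ℂ) : ℝ :=
  ∑ i : ∀ ℓ, (s : Fin t) × Fin (κ ℓ s),
    if ∃ s : Fin t, ∀ ℓ, (i ℓ).1 = s then Complex.normSq (multiProd B P i) else 0

/-- The tensor `B_{ℓ,s} = B ×₁ P_{1s}ᴴ ⋯ ×_{ℓ-1} P_{ℓ-1,s}ᴴ ×_{ℓ+1} P_{ℓ+1,s}ᴴ ⋯ ×ₘ P_{ms}ᴴ`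
(mode products by the `s`-th column blocks over every mode except `ℓ`), evaluated at the index
whose `ℓ`-th component is `a` and whose other components are given by `ih`. -/
noncomputable def Bls {m t : ℕ} {n : Fin m → ℕ} {κ : Fin m → Fin t → ℕ}
    (B : (∀ ℓ, Fin (n ℓ)) → ℂ)
    (P : ∀ ℓ, Matrix (Fin (n ℓ)) ((s : Fin t) × Fin (κ ℓ s)) ℂ)
    (ℓ : Fin m) (s : Fin t) (a : Fin (n ℓ))
    (ih : ∀ r : {r : Fin m // r ≠ ℓ}, Fin (κ r.1 s)) : ℂ :=
  ∑ j : ∀ r, Fin (n r),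
    if j ℓ = a then (∏ r : {r : Fin m // r ≠ ℓ}, star (P r.1 (j r.1) ⟨s, ih r⟩)) * B j else 0

/-- The matrix `H_{ℓs}(P₁,…,Pₘ) ∈ ℂ^{n_ℓ×n_ℓ}` with `(a,b)`-entry
`Σ_î B_{ℓ,s}(î[ℓ↦a])·conj(B_{ℓ,s}(î[ℓ↦b]))`, summed over multi-indices `î` with the
`ℓ`-th coordinate ignored. -/
noncomputable def Hmat {m t : ℕ} {n : Fin m → ℕ} {κ : Fin m → Fin t → ℕ}
    (B : (∀ ℓ, Fin (n ℓ)) → ℂ)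
    (P : ∀ ℓ, Matrix (Fin (n ℓ)) ((s : Fin t) × Fin (κ ℓ s)) ℂ)
    (ℓ : Fin m) (s : Fin t) : Matrix (Fin (n ℓ)) (Fin (n ℓ)) ℂ :=
  Matrix.of fun a b =>
    ∑ ih : ∀ r : {r : Fin m // r ≠ ℓ}, Fin (κ r.1 s),
      Bls B P ℓ s a ih * star (Bls B P ℓ s b ih)

/-- The partial Euclidean gradient `ℋ_ℓ(P₁,…,Pₘ) ∈ ℂ^{n_ℓ×k_ℓ}` of `fObj` with respect to
`P ℓ` (for the real inner product `⟨X,Y⟩ = Re tr(Yᴴ X)`): its `s`-th column block is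
`2 · H_{ℓs}(P₁,…,Pₘ) · P_{ℓs}`. -/
noncomputable def scrH {m t : ℕ} {n : Fin m → ℕ} {κ : Fin m → Fin t → ℕ}
    (B : (∀ ℓ, Fin (n ℓ)) → ℂ)
    (P : ∀ ℓ, Matrix (Fin (n ℓ)) ((s : Fin t) × Fin (κ ℓ s)) ℂ)
    (ℓ : Fin m) : Matrix (Fin (n ℓ)) ((s : Fin t) × Fin (κ ℓ s)) ℂ :=
  Matrix.of fun a sc => 2 * ∑ b, Hmat B P ℓ sc.1 a b * P ℓ b sc

/-- The Frobenius norm of a complex matrix. -/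
noncomputable def frobNorm {α β : Type*} [Fintype α] [Fintype β] (X : Matrix α β ℂ) : ℝ :=
  Real.sqrt (∑ a, ∑ b, Complex.normSq (X a b))

namespace NPDo
variable {m t : ℕ} {n : Fin m → ℕ} {κ : Fin m → Fin t → ℕ}

/-- quadratic form associated with the mode-`ℓ` matrices `Hmat`. -/
noncomputable def qf (B : (∀ ℓ, Fin (n ℓ)) → ℂ)
    (P : ∀ ℓ, Matrix (Fin (n ℓ)) ((s : Fin t) × Fin (κ ℓ s)) ℂ) (ℓ : Fin m)
    (X Y : Matrix (Fin (n ℓ)) ((s : Fin t) × Fin (κ ℓ s)) ℂ) : ℂ :=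
  ∑ sc : (s : Fin t) × Fin (κ ℓ s), ∑ a, ∑ b, star (X a sc) * Hmat B P ℓ sc.1 a b * Y b sc

lemma Bls_congr {B : (∀ ℓ, Fin (n ℓ)) → ℂ}
    {P P' : ∀ ℓ, Matrix (Fin (n ℓ)) ((s : Fin t) × Fin (κ ℓ s)) ℂ} {ℓ : Fin m}
    (h : ∀ r, r ≠ ℓ → P r = P' r) (s : Fin t) (a : Fin (n ℓ))
    (ih : ∀ r : {r : Fin m // r ≠ ℓ}, Fin (κ r.1 s)) :
    Bls B P ℓ s a ih = Bls B P' ℓ s a ih := by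
  unfold Bls
  refine Finset.sum_congr rfl fun j _ => ?_
  have : (∏ r : {r : Fin m // r ≠ ℓ}, star (P r.1 (j r.1) ⟨s, ih r⟩))
      = ∏ r : {r : Fin m // r ≠ ℓ}, star (P' r.1 (j r.1) ⟨s, ih r⟩) :=
    Finset.prod_congr rfl fun r _ => by rw [h r.1 r.2]
  rw [this]

lemma Hmat_congr {B : (∀ ℓ, Fin (n ℓ)) → ℂ}
    {P P' : ∀ ℓ, Matrix (Fin (n ℓ)) ((s : Fin t) × Fin (κ ℓ s)) ℂ} {ℓ : Fin m}
    (h : ∀ r, r ≠ ℓ → P r = P' r) : Hmat B P ℓ = Hmat B P' ℓ := by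
  funext s
  ext a b
  unfold Hmat
  simp only [Matrix.of_apply]
  exact Finset.sum_congr rfl fun ih _ => by rw [Bls_congr h, Bls_congr h]

lemma Hmat_star (B : (∀ ℓ, Fin (n ℓ)) → ℂ)
    (P : ∀ ℓ, Matrix (Fin (n ℓ)) ((s : Fin t) × Fin (κ ℓ s)) ℂ) (ℓ : Fin m) (s : Fin t)
    (a b : Fin (n ℓ)) : star (Hmat B P ℓ s a b) = Hmat B P ℓ s b a := by
  unfold Hmat
  simp only [Matrix.of_apply, star_sum, star_mul', star_star]
  exact Finset.sum_congr rfl fun ih _ => mul_comm _ _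

lemma qf_star (B : (∀ ℓ, Fin (n ℓ)) → ℂ)
    (P : ∀ ℓ, Matrix (Fin (n ℓ)) ((s : Fin t) × Fin (κ ℓ s)) ℂ) (ℓ : Fin m)
    (X Y : Matrix (Fin (n ℓ)) ((s : Fin t) × Fin (κ ℓ s)) ℂ) :
    star (qf B P ℓ X Y) = qf B P ℓ Y X := by
  unfold qf
  simp only [star_sum]
  refine Finset.sum_congr rfl fun sc _ => ?_
  rw [Finset.sum_comm]
  refine Finset.sum_congr rfl fun b _ => Finset.sum_congr rfl fun a _ => ?_
  rw [star_mul', star_mul', star_star, Hmat_star]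
  ring

lemma qf_add_left (B : (∀ ℓ, Fin (n ℓ)) → ℂ)
    (P : ∀ ℓ, Matrix (Fin (n ℓ)) ((s : Fin t) × Fin (κ ℓ s)) ℂ) (ℓ : Fin m)
    (X X' Y : Matrix (Fin (n ℓ)) ((s : Fin t) × Fin (κ ℓ s)) ℂ) :
    qf B P ℓ (X + X') Y = qf B P ℓ X Y + qf B P ℓ X' Y := by
  unfold qf
  simp only [Matrix.add_apply, star_add, add_mul, Finset.sum_add_distrib]

lemma qf_add_right (B : (∀ ℓ, Fin (n ℓ)) → ℂ)
    (P : ∀ ℓ, Matrix (Fin (n ℓ)) ((s : Fin t) × Fin (κ ℓ s)) ℂ) (ℓ : Fin m)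
    (X Y Y' : Matrix (Fin (n ℓ)) ((s : Fin t) × Fin (κ ℓ s)) ℂ) :
    qf B P ℓ X (Y + Y') = qf B P ℓ X Y + qf B P ℓ X Y' := by
  unfold qf
  simp only [Matrix.add_apply, mul_add, Finset.sum_add_distrib]

lemma qf_self_eq (B : (∀ ℓ, Fin (n ℓ)) → ℂ)
    (P : ∀ ℓ, Matrix (Fin (n ℓ)) ((s : Fin t) × Fin (κ ℓ s)) ℂ) (ℓ : Fin m)
    (X : Matrix (Fin (n ℓ)) ((s : Fin t) × Fin (κ ℓ s)) ℂ) :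
    qf B P ℓ X X =
      ((∑ sc : (s : Fin t) × Fin (κ ℓ s), ∑ ih : ∀ r : {r : Fin m // r ≠ ℓ}, Fin (κ r.1 sc.1),
        Complex.normSq (∑ a, star (X a sc) * Bls B P ℓ sc.1 a ih)) : ℝ) := by
  unfold qf
  push_cast
  refine Finset.sum_congr rfl fun sc _ => ?_
  set u : Fin (n ℓ) → (∀ r : {r : Fin m // r ≠ ℓ}, Fin (κ r.1 sc.1)) → ℂ :=
    fun a ih => star (X a sc) * Bls B P ℓ sc.1 a ih with hu
  have term : ∀ a b : Fin (n ℓ), star (X a sc) * Hmat B P ℓ sc.1 a b * X b sc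
      = ∑ ih : ∀ r : {r : Fin m // r ≠ ℓ}, Fin (κ r.1 sc.1), u a ih * star (u b ih) := by
    intro a b
    unfold Hmat
    simp only [Matrix.of_apply, Finset.mul_sum, Finset.sum_mul, hu, star_mul', star_star]
    exact Finset.sum_congr rfl fun ih _ => by ring
  calc ∑ a, ∑ b, star (X a sc) * Hmat B P ℓ sc.1 a b * X b sc
      = ∑ a, ∑ b, ∑ ih : ∀ r : {r : Fin m // r ≠ ℓ}, Fin (κ r.1 sc.1),
          u a ih * star (u b ih) := by
        exact Finset.sum_congr rfl fun a _ => Finset.sum_congr rfl fun b _ => term a b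
    _ = ∑ a, ∑ ih : ∀ r : {r : Fin m // r ≠ ℓ}, Fin (κ r.1 sc.1), ∑ b,
          u a ih * star (u b ih) := Finset.sum_congr rfl fun a _ => Finset.sum_comm
    _ = ∑ ih : ∀ r : {r : Fin m // r ≠ ℓ}, Fin (κ r.1 sc.1), ∑ a, ∑ b,
          u a ih * star (u b ih) := Finset.sum_comm
    _ = ∑ ih : ∀ r : {r : Fin m // r ≠ ℓ}, Fin (κ r.1 sc.1),
          (∑ a, u a ih) * star (∑ b, u b ih) := by
        refine Finset.sum_congr rfl fun ih _ => ?_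
        rw [star_sum, Finset.sum_mul_sum]
    _ = ∑ ih : ∀ r : {r : Fin m // r ≠ ℓ}, Fin (κ r.1 sc.1),
          ((Complex.normSq (∑ a, star (X a sc) * Bls B P ℓ sc.1 a ih) : ℝ) : ℂ) := by
        refine Finset.sum_congr rfl fun ih _ => ?_
        rw [Complex.star_def, Complex.mul_conj]
        simp only [hu, Complex.star_def]

lemma qf_self_nonneg (B : (∀ ℓ, Fin (n ℓ)) → ℂ)
    (P : ∀ ℓ, Matrix (Fin (n ℓ)) ((s : Fin t) × Fin (κ ℓ s)) ℂ) (ℓ : Fin m)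
    (X : Matrix (Fin (n ℓ)) ((s : Fin t) × Fin (κ ℓ s)) ℂ) :
    0 ≤ (qf B P ℓ X X).re ∧ (qf B P ℓ X X).im = 0 := by
  rw [qf_self_eq]
  constructor
  · rw [Complex.ofReal_re]
    exact Finset.sum_nonneg fun sc _ => Finset.sum_nonneg fun ih _ => Complex.normSq_nonneg _
  · rw [Complex.ofReal_im]

end NPDo
namespace NPDo

/-- sum of `star X * Y` over entries equals the trace of `Xᴴ * Y`. -/
lemma sum_star_mul_eq_trace {α β : Type*} [Fintype α] [Fintype β] (X Y : Matrix α β ℂ) :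
    ∑ a, ∑ sc, star (X a sc) * Y a sc = Matrix.trace (Xᴴ * Y) := by
  simp only [Matrix.trace, Matrix.diag, Matrix.mul_apply, Matrix.conjTranspose_apply]
  exact Finset.sum_comm

/-- squared Frobenius norm -/
noncomputable def fsq {α β : Type*} [Fintype α] [Fintype β] (X : Matrix α β ℂ) : ℝ :=
  ∑ a, ∑ b, Complex.normSq (X a b)

lemma fsq_nonneg {α β : Type*} [Fintype α] [Fintype β] (X : Matrix α β ℂ) : 0 ≤ fsq X :=
  Finset.sum_nonneg fun _ _ => Finset.sum_nonneg fun _ _ => Complex.normSq_nonneg _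

lemma normSq_le_fsq {α β : Type*} [Fintype α] [Fintype β] (X : Matrix α β ℂ) (a : α) (b : β) :
    Complex.normSq (X a b) ≤ fsq X := by
  have h1 : Complex.normSq (X a b) ≤ ∑ b', Complex.normSq (X a b') :=
    Finset.single_le_sum (f := fun b' => Complex.normSq (X a b'))
      (fun _ _ => Complex.normSq_nonneg _) (Finset.mem_univ b)
  refine h1.trans ?_
  exact Finset.single_le_sum (f := fun a' => ∑ b', Complex.normSq (X a' b'))
    (fun _ _ => Finset.sum_nonneg fun _ _ => Complex.normSq_nonneg _) (Finset.mem_univ a)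

lemma trace_conjTranspose_mul_self {α β : Type*} [Fintype α] [Fintype β] (X : Matrix α β ℂ) :
    Matrix.trace (Xᴴ * X) = ((fsq X : ℝ) : ℂ) := by
  rw [← sum_star_mul_eq_trace, fsq]
  push_cast
  refine Finset.sum_congr rfl fun a _ => Finset.sum_congr rfl fun b _ => ?_
  rw [Complex.star_def, mul_comm, Complex.mul_conj]

/-- Cauchy–Schwarz for complex sums, `normSq` form. -/
lemma normSq_sum_mul_le {ι : Type*} [Fintype ι] (u v : ι → ℂ) :
    Complex.normSq (∑ b, u b * v b) ≤ (∑ b, Complex.normSq (u b)) * ∑ b, Complex.normSq (v b) := by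
  have h1 : ‖∑ b, u b * v b‖ ≤ ∑ b, ‖u b‖ * ‖v b‖ := by
    refine (norm_sum_le _ _).trans ?_
    exact le_of_eq (Finset.sum_congr rfl fun b _ => norm_mul _ _)
  have h2 : (∑ b, ‖u b‖ * ‖v b‖) ^ 2
      ≤ (∑ b, ‖u b‖ ^ 2) * ∑ b, ‖v b‖ ^ 2 :=
    Finset.sum_mul_sq_le_sq_mul_sq _ _ _
  have h3 : Complex.normSq (∑ b, u b * v b) = ‖∑ b, u b * v b‖ ^ 2 :=
    (Complex.sq_norm _).symm
  rw [h3]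
  calc ‖∑ b, u b * v b‖ ^ 2 ≤ (∑ b, ‖u b‖ * ‖v b‖) ^ 2 := by
        have := norm_nonneg (∑ b, u b * v b)
        exact pow_le_pow_left₀ this h1 2
    _ ≤ (∑ b, ‖u b‖ ^ 2) * ∑ b, ‖v b‖ ^ 2 := h2
    _ = (∑ b, Complex.normSq (u b)) * ∑ b, Complex.normSq (v b) := by
        simp only [Complex.sq_norm]

/-- Frobenius norm is submultiplicative. -/
lemma fsq_mul_le {α β γ : Type*} [Fintype α] [Fintype β] [Fintype γ]
    (X : Matrix α β ℂ) (Y : Matrix β γ ℂ) : fsq (X * Y) ≤ fsq X * fsq Y := by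
  unfold fsq
  calc ∑ a, ∑ c, Complex.normSq ((X * Y) a c)
      ≤ ∑ a, ∑ c : γ, (∑ b, Complex.normSq (X a b)) * ∑ b, Complex.normSq (Y b c) := by
        refine Finset.sum_le_sum fun a _ => Finset.sum_le_sum fun c _ => ?_
        rw [Matrix.mul_apply]
        exact normSq_sum_mul_le _ _
    _ = (∑ a, ∑ b, Complex.normSq (X a b)) * ∑ b, ∑ c, Complex.normSq (Y b c) := by
        rw [Finset.sum_mul]
        refine Finset.sum_congr rfl fun a _ => ?_
        rw [← Finset.mul_sum]
        congr 1
        exact Finset.sum_comm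

lemma psd_diag_nonneg {β : Type*} [Fintype β] [DecidableEq β] {N : Matrix β β ℂ}
    (hN : N.PosSemidef) (a : β) : 0 ≤ N a a := by
  have h := hN.dotProduct_mulVec_nonneg (Pi.single a 1)
  have hs : star (Pi.single (M := fun _ : β => ℂ) a 1) = Pi.single a 1 := by
    funext b
    by_cases hb : b = a <;> simp [Pi.single_apply, hb]
  rw [hs] at h
  simpa [Matrix.mulVec_single, single_dotProduct] using h

lemma psd_trace_nonneg {β : Type*} [Fintype β] [DecidableEq β] {N : Matrix β β ℂ}
    (hN : N.PosSemidef) : 0 ≤ Matrix.trace N :=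
  Finset.sum_nonneg fun a _ => psd_diag_nonneg hN a

/-- `tr(Dᴴ D Λ) ≥ 0` for `Λ` PSD. -/
lemma trace_conj_psd_nonneg {α β : Type*} [Fintype α] [Fintype β] [DecidableEq β]
    {Λ : Matrix β β ℂ} (hΛ : Λ.PosSemidef) (D : Matrix α β ℂ) :
    0 ≤ Matrix.trace (Dᴴ * D * Λ) := by
  have h : Dᴴ * D * Λ = Dᴴ * (D * Λ) := by rw [Matrix.mul_assoc]
  rw [h, Matrix.trace_mul_comm]
  exact psd_trace_nonneg (hΛ.mul_mul_conjTranspose_same D)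

end NPDo
namespace NPDo
variable {m t : ℕ} {n : Fin m → ℕ} {κ : Fin m → Fin t → ℕ}

lemma sigma_eta' {g : Fin t → ℕ} (y : (s' : Fin t) × Fin (g s')) (s : Fin t) (h : y.1 = s) :
    (⟨s, h ▸ y.2⟩ : (s' : Fin t) × Fin (g s')) = y := by
  subst h; rfl

lemma prod_split (ℓ : Fin m) (g : Fin m → ℂ) :
    ∏ ℓ', g ℓ' = g ℓ * ∏ r : {r : Fin m // r ≠ ℓ}, g r.1 := by
  rw [Fintype.prod_eq_mul_prod_compl ℓ]
  congr 1
  exact Finset.prod_subtype (p := fun r => r ≠ ℓ) ({ℓ}ᶜ) (fun x => by simp) g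

lemma multiProd_diag (B : (∀ ℓ, Fin (n ℓ)) → ℂ)
    (P : ∀ ℓ, Matrix (Fin (n ℓ)) ((s : Fin t) × Fin (κ ℓ s)) ℂ) (ℓ : Fin m) (s : Fin t)
    (c : ∀ ℓ', Fin (κ ℓ' s)) :
    multiProd B P (fun ℓ' => ⟨s, c ℓ'⟩)
      = ∑ a, star (P ℓ a ⟨s, c ℓ⟩) * Bls B P ℓ s a (fun r => c r.1) := by
  unfold multiProd Bls
  have rhs : ∀ a : Fin (n ℓ), star (P ℓ a ⟨s, c ℓ⟩) *
      (∑ j : ∀ r, Fin (n r), if j ℓ = a then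
        (∏ r : {r : Fin m // r ≠ ℓ}, star (P r.1 (j r.1) ⟨s, c r.1⟩)) * B j else 0)
      = ∑ j : ∀ r, Fin (n r), if j ℓ = a then star (P ℓ a ⟨s, c ℓ⟩) *
          ((∏ r : {r : Fin m // r ≠ ℓ}, star (P r.1 (j r.1) ⟨s, c r.1⟩)) * B j) else 0 := by
    intro a
    rw [Finset.mul_sum]
    exact Finset.sum_congr rfl fun j _ => by rw [mul_ite, mul_zero]
  simp only [rhs]
  rw [Finset.sum_comm]
  refine Finset.sum_congr rfl fun j _ => ?_
  rw [Finset.sum_ite_eq (Finset.univ) (j ℓ)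
    (fun a => star (P ℓ a ⟨s, c ℓ⟩) *
      ((∏ r : {r : Fin m // r ≠ ℓ}, star (P r.1 (j r.1) ⟨s, c r.1⟩)) * B j))]
  simp only [Finset.mem_univ, if_true]
  rw [prod_split ℓ (fun ℓ' => star (P ℓ' (j ℓ') ⟨s, c ℓ'⟩))]
  ring

lemma fObj_eq_sum (hm : 1 ≤ m) (B : (∀ ℓ, Fin (n ℓ)) → ℂ)
    (P : ∀ ℓ, Matrix (Fin (n ℓ)) ((s : Fin t) × Fin (κ ℓ s)) ℂ) (ℓ : Fin m) :
    fObj B P = ∑ sc : (s : Fin t) × Fin (κ ℓ s),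
      ∑ ih : ∀ r : {r : Fin m // r ≠ ℓ}, Fin (κ r.1 sc.1),
        Complex.normSq (∑ a, star (P ℓ a sc) * Bls B P ℓ sc.1 a ih) := by
  classical
  calc fObj B P
      = ∑ i ∈ Finset.filter (fun i : ∀ ℓ', (s : Fin t) × Fin (κ ℓ' s) =>
            ∃ s : Fin t, ∀ ℓ', (i ℓ').1 = s) Finset.univ,
          Complex.normSq (multiProd B P i) := by
        unfold fObj
        rw [← Finset.sum_filter]
    _ = ∑ x : (s : Fin t) × (∀ ℓ', Fin (κ ℓ' s)),
          Complex.normSq (multiProd B P (fun ℓ' => ⟨x.1, x.2 ℓ'⟩)) := by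
        refine (Finset.sum_bij (fun (x : (s : Fin t) × (∀ ℓ', Fin (κ ℓ' s))) _ =>
          (fun ℓ' => (⟨x.1, x.2 ℓ'⟩ : (s : Fin t) × Fin (κ ℓ' s)))) ?_ ?_ ?_ ?_).symm
        · intro x _
          rw [Finset.mem_filter]
          exact ⟨Finset.mem_univ _, ⟨x.1, fun ℓ' => rfl⟩⟩
        · intro x hx y hy hxy
          have h0 := congrFun hxy ⟨0, hm⟩
          rw [Sigma.mk.inj_iff] at h0
          have h1 : x.1 = y.1 := h0.1
          obtain ⟨x1, x2⟩ := x
          obtain ⟨y1, y2⟩ := y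
          dsimp at h1
          subst h1
          simp only [Sigma.mk.inj_iff, heq_eq_eq, true_and]
          funext ℓ'
          have := congrFun hxy ℓ'
          simpa [Sigma.mk.inj_iff] using this
        · intro i hi
          rw [Finset.mem_filter] at hi
          obtain ⟨-, s, hs⟩ := hi
          refine ⟨⟨s, fun ℓ' => (hs ℓ') ▸ (i ℓ').2⟩, Finset.mem_univ _, ?_⟩
          funext ℓ'
          exact sigma_eta' (i ℓ') s (hs ℓ')
        · intro x _
          rfl
    _ = ∑ s : Fin t, ∑ c : ∀ ℓ', Fin (κ ℓ' s),
          Complex.normSq (multiProd B P (fun ℓ' => ⟨s, c ℓ'⟩)) := by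
        rw [← Finset.univ_sigma_univ, Finset.sum_sigma]
    _ = ∑ s : Fin t, ∑ c : ∀ ℓ', Fin (κ ℓ' s),
          Complex.normSq (∑ a, star (P ℓ a ⟨s, c ℓ⟩) * Bls B P ℓ s a (fun r => c r.1)) := by
        refine Finset.sum_congr rfl fun s _ => Finset.sum_congr rfl fun c _ => ?_
        rw [multiProd_diag B P ℓ s c]
    _ = ∑ s : Fin t, ∑ u : Fin (κ ℓ s), ∑ v : ∀ r : {r : Fin m // r ≠ ℓ}, Fin (κ r.1 s),
          Complex.normSq (∑ a, star (P ℓ a ⟨s, u⟩) * Bls B P ℓ s a v) := by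
        refine Finset.sum_congr rfl fun s _ => ?_
        calc ∑ c : ∀ ℓ', Fin (κ ℓ' s),
              Complex.normSq (∑ a, star (P ℓ a ⟨s, c ℓ⟩) * Bls B P ℓ s a (fun r => c r.1))
            = ∑ uv : Fin (κ ℓ s) × (∀ r : {r : Fin m // r ≠ ℓ}, Fin (κ r.1 s)),
              Complex.normSq (∑ a, star (P ℓ a ⟨s, uv.1⟩) * Bls B P ℓ s a uv.2) :=
            Fintype.sum_equiv (Equiv.piSplitAt ℓ (fun ℓ' => Fin (κ ℓ' s))) _ _ fun c => rfl
          _ = _ := Fintype.sum_prod_type _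
    _ = ∑ sc : (s : Fin t) × Fin (κ ℓ s),
          ∑ ih : ∀ r : {r : Fin m // r ≠ ℓ}, Fin (κ r.1 sc.1),
            Complex.normSq (∑ a, star (P ℓ a sc) * Bls B P ℓ sc.1 a ih) := by
        rw [← Finset.univ_sigma_univ, Finset.sum_sigma]

end NPDo
namespace NPDo
variable {m t : ℕ} {n : Fin m → ℕ} {κ : Fin m → Fin t → ℕ}

lemma fObj_eq_qf (hm : 1 ≤ m) (B : (∀ ℓ, Fin (n ℓ)) → ℂ)
    (P : ∀ ℓ, Matrix (Fin (n ℓ)) ((s : Fin t) × Fin (κ ℓ s)) ℂ) (ℓ : Fin m) :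
    ((fObj B P : ℝ) : ℂ) = qf B P ℓ (P ℓ) (P ℓ) := by
  rw [fObj_eq_sum hm B P ℓ, qf_self_eq]

lemma dot_star_self {J : Type*} [Fintype J] (v : J → ℂ) :
    dotProduct (star v) v = ((∑ j, Complex.normSq (v j) : ℝ) : ℂ) := by
  push_cast
  simp only [dotProduct, Pi.star_apply]
  refine Finset.sum_congr rfl fun j _ => ?_
  rw [Complex.star_def, mul_comm, Complex.mul_conj]

lemma fObj_le_bound (B : (∀ ℓ, Fin (n ℓ)) → ℂ)
    (P : ∀ ℓ, Matrix (Fin (n ℓ)) ((s : Fin t) × Fin (κ ℓ s)) ℂ)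
    (horth : ∀ ℓ, (P ℓ)ᴴ * P ℓ = 1) :
    fObj B P ≤ ∑ j : ∀ ℓ, Fin (n ℓ), Complex.normSq (B j) := by
  classical
  set M : Matrix (∀ ℓ, Fin (n ℓ)) (∀ ℓ, Fin (n ℓ)) ℂ :=
    Matrix.of fun j' j => ∏ ℓ, (P ℓ * (P ℓ)ᴴ) (j' ℓ) (j ℓ) with hM
  have step0 : fObj B P ≤ ∑ i : ∀ ℓ, (s : Fin t) × Fin (κ ℓ s),
      Complex.normSq (multiProd B P i) := by
    unfold fObj
    refine Finset.sum_le_sum fun i _ => ?_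
    split
    · exact le_refl _
    · exact Complex.normSq_nonneg _
  have key : ((∑ i : ∀ ℓ, (s : Fin t) × Fin (κ ℓ s),
      Complex.normSq (multiProd B P i) : ℝ) : ℂ) = dotProduct (star B) (M *ᵥ B) := by
    push_cast
    calc ∑ i : ∀ ℓ, (s : Fin t) × Fin (κ ℓ s), ((Complex.normSq (multiProd B P i) : ℝ) : ℂ)
        = ∑ i : ∀ ℓ, (s : Fin t) × Fin (κ ℓ s),
            multiProd B P i * star (multiProd B P i) := by
          refine Finset.sum_congr rfl fun i _ => ?_
          rw [Complex.star_def, Complex.mul_conj]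
      _ = ∑ i : ∀ ℓ, (s : Fin t) × Fin (κ ℓ s), ∑ j : ∀ ℓ, Fin (n ℓ), ∑ j' : ∀ ℓ, Fin (n ℓ),
            (B j * star (B j')) * ∏ ℓ, star (P ℓ (j ℓ) (i ℓ)) * P ℓ (j' ℓ) (i ℓ) := by
          refine Finset.sum_congr rfl fun i _ => ?_
          unfold multiProd
          rw [star_sum, Finset.sum_mul_sum]
          refine Finset.sum_congr rfl fun j _ => Finset.sum_congr rfl fun j' _ => ?_
          rw [star_mul', star_prod, Finset.prod_mul_distrib]
          simp only [star_star]
          ring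
      _ = ∑ j : ∀ ℓ, Fin (n ℓ), ∑ j' : ∀ ℓ, Fin (n ℓ),
            (B j * star (B j')) * ∏ ℓ, ∑ c : (s : Fin t) × Fin (κ ℓ s),
              star (P ℓ (j ℓ) c) * P ℓ (j' ℓ) c := by
          rw [Finset.sum_comm]
          refine Finset.sum_congr rfl fun j _ => ?_
          rw [Finset.sum_comm]
          refine Finset.sum_congr rfl fun j' _ => ?_
          rw [← Finset.mul_sum, Fintype.prod_sum]
      _ = dotProduct (star B) (M *ᵥ B) := by
          simp only [dotProduct, Matrix.mulVec, Pi.star_apply, hM, Matrix.of_apply, dotProduct]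
          rw [Finset.sum_comm]
          refine Finset.sum_congr rfl fun a _ => ?_
          rw [Finset.mul_sum]
          refine Finset.sum_congr rfl fun b _ => ?_
          have hGram : ∀ ℓ, (∑ c : (s : Fin t) × Fin (κ ℓ s), star (P ℓ (b ℓ) c) * P ℓ (a ℓ) c)
              = (P ℓ * (P ℓ)ᴴ) (a ℓ) (b ℓ) := by
            intro ℓ
            rw [Matrix.mul_apply]
            refine Finset.sum_congr rfl fun c _ => ?_
            rw [Matrix.conjTranspose_apply]
            ring
          rw [Finset.prod_congr rfl fun ℓ _ => hGram ℓ]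
          ring
  have hMH : Mᴴ = M := by
    ext j j'
    rw [Matrix.conjTranspose_apply, hM]
    simp only [Matrix.of_apply, star_prod]
    refine Finset.prod_congr rfl fun ℓ _ => ?_
    rw [← Matrix.conjTranspose_apply, (Matrix.isHermitian_mul_conjTranspose_self (P ℓ)).eq]
  have hMM : M * M = M := by
    ext j' j
    rw [Matrix.mul_apply, hM]
    simp only [Matrix.of_apply]
    have : ∀ k : ∀ ℓ, Fin (n ℓ), (∏ ℓ, (P ℓ * (P ℓ)ᴴ) (j' ℓ) (k ℓ)) * ∏ ℓ, (P ℓ * (P ℓ)ᴴ) (k ℓ) (j ℓ)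
        = ∏ ℓ, ((P ℓ * (P ℓ)ᴴ) (j' ℓ) (k ℓ) * (P ℓ * (P ℓ)ᴴ) (k ℓ) (j ℓ)) :=
      fun k => (Finset.prod_mul_distrib).symm
    simp only [this]
    rw [← Fintype.prod_sum (fun ℓ (c : Fin (n ℓ)) => (P ℓ * (P ℓ)ᴴ) (j' ℓ) c * (P ℓ * (P ℓ)ᴴ) c (j ℓ))]
    refine Finset.prod_congr rfl fun ℓ _ => ?_
    have hGG : (P ℓ * (P ℓ)ᴴ) * (P ℓ * (P ℓ)ᴴ) = P ℓ * (P ℓ)ᴴ := by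
      calc (P ℓ * (P ℓ)ᴴ) * (P ℓ * (P ℓ)ᴴ) = P ℓ * ((P ℓ)ᴴ * P ℓ) * (P ℓ)ᴴ := by
            rw [Matrix.mul_assoc, Matrix.mul_assoc, Matrix.mul_assoc]
        _ = P ℓ * (P ℓ)ᴴ := by rw [horth ℓ, Matrix.mul_one]
    conv_rhs => rw [← hGG]
    rw [Matrix.mul_apply]
  set C : (∀ ℓ, Fin (n ℓ)) → ℂ := M *ᵥ B with hC
  have h1 : dotProduct (star B) C = dotProduct (star C) C := by
    have hsC : star C = star B ᵥ* Mᴴ := by rw [hC, Matrix.star_mulVec]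
    calc star B ⬝ᵥ C = star B ⬝ᵥ (M *ᵥ C) := by
          rw [hC, Matrix.mulVec_mulVec, hMM]
      _ = (star B ᵥ* M) ⬝ᵥ C := Matrix.dotProduct_mulVec _ _ _
      _ = star C ⬝ᵥ C := by rw [hsC, hMH]
  have h2 : dotProduct (star C) B = dotProduct (star C) C := by
    have hsC : star C = star B ᵥ* Mᴴ := by rw [hC, Matrix.star_mulVec]
    calc star C ⬝ᵥ B = (star B ᵥ* M) ⬝ᵥ B := by rw [hsC, hMH]
      _ = star B ⬝ᵥ (M *ᵥ B) := (Matrix.dotProduct_mulVec _ _ _).symm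
      _ = star C ⬝ᵥ C := by rw [← hC, h1]
  have h3 : ((∑ j, Complex.normSq ((B - C) j) : ℝ) : ℂ)
      = dotProduct (star B) B - dotProduct (star C) C := by
    rw [← dot_star_self]
    have : star (B - C) = star B - star C := star_sub _ _
    rw [this, sub_dotProduct, dotProduct_sub, dotProduct_sub, h1, h2]
    ring
  have hfinal : (∑ i : ∀ ℓ, (s : Fin t) × Fin (κ ℓ s), Complex.normSq (multiProd B P i))
      ≤ ∑ j, Complex.normSq (B j) := by
    have e1 : (∑ i : ∀ ℓ, (s : Fin t) × Fin (κ ℓ s), Complex.normSq (multiProd B P i))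
        = (dotProduct (star C) C).re := by
      have := congrArg Complex.re (key.trans h1)
      simpa using this
    have e2 : (dotProduct (star C) C).re
        = (∑ j, Complex.normSq (B j)) - ∑ j, Complex.normSq ((B - C) j) := by
      have := congrArg Complex.re h3
      rw [dot_star_self] at this
      simp only [Complex.ofReal_re, Complex.sub_re] at this
      rw [dot_star_self] at this ⊢
      simp only [Complex.ofReal_re] at this ⊢
      linarith
    rw [e1, e2]
    have : 0 ≤ ∑ j, Complex.normSq ((B - C) j) :=
      Finset.sum_nonneg fun _ _ => Complex.normSq_nonneg _
    linarith
  exact step0.trans hfinal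

end NPDo
namespace NPDo
variable {m t : ℕ} {n : Fin m → ℕ} {κ : Fin m → Fin t → ℕ}

lemma qf_congr {B : (∀ ℓ, Fin (n ℓ)) → ℂ}
    {P P' : ∀ ℓ, Matrix (Fin (n ℓ)) ((s : Fin t) × Fin (κ ℓ s)) ℂ} {ℓ : Fin m}
    (h : ∀ r, r ≠ ℓ → P r = P' r)
    (X Y : Matrix (Fin (n ℓ)) ((s : Fin t) × Fin (κ ℓ s)) ℂ) :
    qf B P ℓ X Y = qf B P' ℓ X Y := by
  unfold qf
  rw [Hmat_congr h]

lemma scrH_qf (B : (∀ ℓ, Fin (n ℓ)) → ℂ)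
    (P : ∀ ℓ, Matrix (Fin (n ℓ)) ((s : Fin t) × Fin (κ ℓ s)) ℂ) (ℓ : Fin m)
    (X : Matrix (Fin (n ℓ)) ((s : Fin t) × Fin (κ ℓ s)) ℂ) :
    Matrix.trace (Xᴴ * scrH B P ℓ) = 2 * qf B P ℓ X (P ℓ) := by
  rw [← sum_star_mul_eq_trace]
  unfold qf
  rw [Finset.mul_sum, Finset.sum_comm]
  refine Finset.sum_congr rfl fun a _ => ?_
  rw [Finset.mul_sum]
  refine Finset.sum_congr rfl fun sc _ => ?_
  unfold scrH
  simp only [Matrix.of_apply]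
  rw [Finset.mul_sum, Finset.mul_sum, Finset.mul_sum]
  refine Finset.sum_congr rfl fun b _ => ?_
  ring

/-- The Gauss–Seidel step increases `fObj` by at least `tr(Dᴴ D Λ)/2`. -/
lemma increment (hm : 1 ≤ m) (B : (∀ ℓ, Fin (n ℓ)) → ℂ)
    (T : ∀ ℓ, Matrix (Fin (n ℓ)) ((s : Fin t) × Fin (κ ℓ s)) ℂ) (ℓ : Fin m)
    (Q : Matrix (Fin (n ℓ)) ((s : Fin t) × Fin (κ ℓ s)) ℂ)
    (hT : (T ℓ)ᴴ * T ℓ = 1) (hQ : Qᴴ * Q = 1)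
    (Λ : Matrix ((s : Fin t) × Fin (κ ℓ s)) ((s : Fin t) × Fin (κ ℓ s)) ℂ)
    (hΛ : Λ.PosSemidef) (hpolar : scrH B T ℓ = Q * Λ) :
    (Matrix.trace ((Q - T ℓ)ᴴ * (Q - T ℓ) * Λ)).re
        ≤ 2 * (fObj B (Function.update T ℓ Q) - fObj B T)
      ∧ 0 ≤ (Matrix.trace ((Q - T ℓ)ᴴ * (Q - T ℓ) * Λ)).re
      ∧ fObj B T ≤ fObj B (Function.update T ℓ Q) := by
  classical
  set D : Matrix (Fin (n ℓ)) ((s : Fin t) × Fin (κ ℓ s)) ℂ := Q - T ℓ with hD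
  have hQD : Q = T ℓ + D := by rw [hD]; abel
  -- new objective value
  have hnew : ((fObj B (Function.update T ℓ Q) : ℝ) : ℂ) = qf B T ℓ Q Q := by
    rw [fObj_eq_qf hm B (Function.update T ℓ Q) ℓ, Function.update_self]
    exact qf_congr (fun r hr => Function.update_of_ne hr Q T) Q Q
  have hold : ((fObj B T : ℝ) : ℂ) = qf B T ℓ (T ℓ) (T ℓ) := fObj_eq_qf hm B T ℓ
  -- expansion
  have hexp : qf B T ℓ Q Q = qf B T ℓ (T ℓ) (T ℓ) + (qf B T ℓ D (T ℓ) + star (qf B T ℓ D (T ℓ)))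
      + qf B T ℓ D D := by
    conv_lhs => rw [hQD]
    rw [qf_add_left, qf_add_right, qf_add_right, qf_star]
    ring
  -- trace identity
  have htr2 : Matrix.trace (Dᴴ * scrH B T ℓ) = 2 * qf B T ℓ D (T ℓ) := scrH_qf B T ℓ D
  have hDD : Dᴴ * Q + Qᴴ * D = Dᴴ * D := by
    rw [hD]
    simp only [Matrix.conjTranspose_sub, Matrix.sub_mul, Matrix.mul_sub, hQ, hT]
    abel
  have htrsum : Matrix.trace (Dᴴ * scrH B T ℓ) + star (Matrix.trace (Dᴴ * scrH B T ℓ))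
      = Matrix.trace (Dᴴ * D * Λ) := by
    rw [hpolar]
    have h1 : Matrix.trace (Dᴴ * (Q * Λ)) = Matrix.trace ((Dᴴ * Q) * Λ) := by
      rw [Matrix.mul_assoc]
    have h2 : star (Matrix.trace (Dᴴ * (Q * Λ))) = Matrix.trace ((Qᴴ * D) * Λ) := by
      rw [← Matrix.trace_conjTranspose]
      have he : (Dᴴ * (Q * Λ))ᴴ = (Λ * Qᴴ) * D := by
        rw [Matrix.conjTranspose_mul, Matrix.conjTranspose_mul,
          Matrix.conjTranspose_conjTranspose, hΛ.isHermitian.eq]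
      rw [he, Matrix.mul_assoc, Matrix.trace_mul_comm]
    rw [h2, h1, ← Matrix.trace_add, ← Matrix.add_mul, hDD]
  -- positivity of the trace term
  have htrpos : 0 ≤ Matrix.trace (Dᴴ * D * Λ) := trace_conj_psd_nonneg hΛ D
  have htrre : 0 ≤ (Matrix.trace (Dᴴ * D * Λ)).re ∧ (Matrix.trace (Dᴴ * D * Λ)).im = 0 := by
    have h := Complex.le_def.mp htrpos
    exact ⟨by simpa using h.1, by simpa using h.2.symm⟩
  -- real part bookkeeping
  have hqdd := qf_self_nonneg B T ℓ D
  have h4 : 4 * (qf B T ℓ D (T ℓ)).re = (Matrix.trace (Dᴴ * D * Λ)).re := by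
    have h := congrArg Complex.re htrsum
    rw [htr2] at h
    simp only [Complex.add_re, Complex.star_def, Complex.conj_re, Complex.mul_re,
      Complex.re_ofNat, Complex.im_ofNat] at h
    linarith
  have hdiff : fObj B (Function.update T ℓ Q) - fObj B T
      = (Matrix.trace (Dᴴ * D * Λ)).re / 2 + (qf B T ℓ D D).re := by
    have hre : fObj B (Function.update T ℓ Q) - fObj B T
        = (qf B T ℓ Q Q).re - (qf B T ℓ (T ℓ) (T ℓ)).re := by
      rw [← Complex.ofReal_re (fObj B (Function.update T ℓ Q)),
        ← Complex.ofReal_re (fObj B T), hnew, hold]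
    have hexp_re : (qf B T ℓ Q Q).re
        = (qf B T ℓ (T ℓ) (T ℓ)).re + 2 * (qf B T ℓ D (T ℓ)).re + (qf B T ℓ D D).re := by
      rw [hexp]
      simp only [Complex.add_re, Complex.star_def, Complex.conj_re]
      ring
    rw [hre, hexp_re]
    linarith
  refine ⟨by linarith [hqdd.1], by linarith, by linarith [hqdd.1]⟩

end NPDo
namespace NPDo
variable {m t : ℕ} {n : Fin m → ℕ} {κ : Fin m → Fin t → ℕ}

lemma tendsto_entry {α β : Type*} [Fintype α] [Fintype β] {F : Filter ℕ}
    {X : ℕ → Matrix α β ℂ} {Y : Matrix α β ℂ}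
    (h : Tendsto (fun j => frobNorm (X j - Y)) F (𝓝 0)) (a : α) (b : β) :
    Tendsto (fun j => X j a b) F (𝓝 (Y a b)) := by
  have hb : ∀ j, ‖X j a b - Y a b‖ ≤ frobNorm (X j - Y) := by
    intro j
    have h1 : Complex.normSq ((X j - Y) a b) ≤ ∑ a', ∑ b', Complex.normSq ((X j - Y) a' b') :=
      normSq_le_fsq (X j - Y) a b
    have h2 : ‖X j a b - Y a b‖ = Real.sqrt (Complex.normSq ((X j - Y) a b)) := by
      rw [Matrix.sub_apply, Complex.norm_def]
    rw [h2]
    exact Real.sqrt_le_sqrt h1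
  have h0 : Tendsto (fun j => X j a b - Y a b) F (𝓝 0) := squeeze_zero_norm hb h
  have := h0.add (tendsto_const_nhds (x := Y a b))
  simpa using this

lemma sqrt_fsq_tendsto_zero {α β : Type*} [Fintype α] [Fintype β] {F : Filter ℕ}
    {X : ℕ → Matrix α β ℂ} (h : Tendsto (fun j => fsq (X j)) F (𝓝 0)) (a : α) (b : β) :
    Tendsto (fun j => X j a b) F (𝓝 0) := by
  have hb : ∀ j, ‖X j a b‖ ≤ Real.sqrt (fsq (X j)) := by
    intro j
    rw [Complex.norm_def]
    exact Real.sqrt_le_sqrt (normSq_le_fsq (X j) a b)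
  have hs : Tendsto (fun j => Real.sqrt (fsq (X j))) F (𝓝 0) := by
    have := (Real.continuous_sqrt.continuousAt (x := 0)).tendsto.comp h
    rw [Real.sqrt_zero] at this; exact this
  exact squeeze_zero_norm hb hs

lemma scrH_tendsto {F : Filter ℕ} (B : (∀ ℓ, Fin (n ℓ)) → ℂ)
    (T : ℕ → ∀ r, Matrix (Fin (n r)) ((s : Fin t) × Fin (κ r s)) ℂ)
    (Tstar : ∀ r, Matrix (Fin (n r)) ((s : Fin t) × Fin (κ r s)) ℂ)
    (hent : ∀ r a c, Tendsto (fun j => T j r a c) F (𝓝 (Tstar r a c)))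
    (ℓ : Fin m) (a : Fin (n ℓ)) (sc : (s : Fin t) × Fin (κ ℓ s)) :
    Tendsto (fun j => scrH B (T j) ℓ a sc) F (𝓝 (scrH B Tstar ℓ a sc)) := by
  classical
  have hBls : ∀ (s : Fin t) (a' : Fin (n ℓ)) (ih : ∀ r : {r : Fin m // r ≠ ℓ}, Fin (κ r.1 s)),
      Tendsto (fun j => Bls B (T j) ℓ s a' ih) F (𝓝 (Bls B Tstar ℓ s a' ih)) := by
    intro s a' ih
    unfold Bls
    refine tendsto_finset_sum _ fun j' _ => ?_
    by_cases hc : j' ℓ = a'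
    · simp only [hc, eq_self_iff_true, if_true]
      refine Tendsto.mul ?_ tendsto_const_nhds
      refine tendsto_finset_prod _ fun r _ => ?_
      exact (hent r.1 (j' r.1) ⟨s, ih r⟩).star
    · simp only [hc, if_false]
      exact tendsto_const_nhds
  have hHmat : ∀ (s : Fin t) (a' b : Fin (n ℓ)),
      Tendsto (fun j => Hmat B (T j) ℓ s a' b) F (𝓝 (Hmat B Tstar ℓ s a' b)) := by
    intro s a' b
    unfold Hmat
    simp only [Matrix.of_apply]
    exact tendsto_finset_sum _ fun ih _ => ((hBls s a' ih).mul (hBls s b ih).star)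
  unfold scrH
  simp only [Matrix.of_apply]
  exact ((tendsto_finset_sum _ fun b _ => (hHmat sc.1 a b).mul (hent ℓ b sc)).const_mul 2)

lemma trace_re_le_sqrt {α β : Type*} [Fintype α] [Fintype β] (X Y : Matrix α β ℂ) :
    (Matrix.trace (Xᴴ * Y)).re ≤ Real.sqrt (fsq X) * Real.sqrt (fsq Y) := by
  rw [← sum_star_mul_eq_trace]
  have h1 : (∑ a, ∑ b, star (X a b) * Y a b).re
      ≤ ∑ a, ∑ b, ‖X a b‖ * ‖Y a b‖ := by
    rw [Complex.re_sum]
    refine Finset.sum_le_sum fun a _ => ?_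
    rw [Complex.re_sum]
    refine Finset.sum_le_sum fun b _ => ?_
    refine (Complex.re_le_norm _).trans ?_
    have : ‖star (X a b) * Y a b‖ = ‖X a b‖ * ‖Y a b‖ := by
      rw [norm_mul, Complex.star_def, Complex.norm_conj]
    exact le_of_eq this
  refine h1.trans ?_
  have h2 : (∑ a, ∑ b, ‖X a b‖ * ‖Y a b‖) ^ 2 ≤ fsq X * fsq Y := by
    have e1 : (∑ a, ∑ b, ‖X a b‖ * ‖Y a b‖)
        = ∑ p : α × β, ‖X p.1 p.2‖ * ‖Y p.1 p.2‖ :=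
      (Fintype.sum_prod_type
        (fun p : α × β => ‖X p.1 p.2‖ * ‖Y p.1 p.2‖)).symm
    have e2 : fsq X = ∑ p : α × β, ‖X p.1 p.2‖ ^ 2 := by
      rw [fsq, ← Fintype.sum_prod_type (fun p : α × β => Complex.normSq (X p.1 p.2))]
      exact Finset.sum_congr rfl fun p _ => (Complex.sq_norm _).symm
    have e3 : fsq Y = ∑ p : α × β, ‖Y p.1 p.2‖ ^ 2 := by
      rw [fsq, ← Fintype.sum_prod_type (fun p : α × β => Complex.normSq (Y p.1 p.2))]
      exact Finset.sum_congr rfl fun p _ => (Complex.sq_norm _).symm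
    rw [e1, e2, e3]
    exact Finset.sum_mul_sq_le_sq_mul_sq _ _ _
  have hpos : 0 ≤ ∑ a, ∑ b, ‖X a b‖ * ‖Y a b‖ :=
    Finset.sum_nonneg fun a _ => Finset.sum_nonneg fun b _ =>
      mul_nonneg (norm_nonneg _) (norm_nonneg _)
  have := Real.sqrt_le_sqrt h2
  rw [Real.sqrt_sq hpos, Real.sqrt_mul (fsq_nonneg X)] at this
  exact this

end NPDo
namespace NPDo

open scoped MatrixOrder in
lemma fsq_mul_psd_le {α β : Type*} [Fintype α] [Fintype β] [DecidableEq β]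
    {Λ : Matrix β β ℂ} (hΛ : Λ.PosSemidef) (D : Matrix α β ℂ) :
    fsq (D * Λ) ≤ (Matrix.trace (Dᴴ * D * Λ)).re * (Matrix.trace Λ).re := by
  set S := CFC.sqrt Λ with hSdef
  have hS : S * S = Λ := CFC.sqrt_mul_sqrt_self Λ hΛ.nonneg
  have hSH : Sᴴ = S := (CFC.sqrt_nonneg Λ).posSemidef.isHermitian
  have h1 : D * Λ = (D * S) * S := by rw [Matrix.mul_assoc, hS]
  have h2 : fsq (D * S) = (Matrix.trace (Dᴴ * D * Λ)).re := by
    have e : Matrix.trace ((D * S)ᴴ * (D * S)) = Matrix.trace (Dᴴ * D * Λ) := by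
      rw [Matrix.conjTranspose_mul, hSH]
      calc Matrix.trace ((S * Dᴴ) * (D * S))
          = Matrix.trace (S * (Dᴴ * (D * S))) := by rw [Matrix.mul_assoc]
        _ = Matrix.trace ((Dᴴ * (D * S)) * S) := Matrix.trace_mul_comm _ _
        _ = Matrix.trace (Dᴴ * D * Λ) := by
            rw [Matrix.mul_assoc Dᴴ (D * S) S, Matrix.mul_assoc D S S, hS, ← Matrix.mul_assoc]
    have := congrArg Complex.re ((trace_conjTranspose_mul_self (D * S)).symm.trans e)
    simpa using this
  have h3 : fsq S = (Matrix.trace Λ).re := by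
    have e : Matrix.trace (Sᴴ * S) = Matrix.trace Λ := by rw [hSH, hS]
    have := congrArg Complex.re ((trace_conjTranspose_mul_self S).symm.trans e)
    simpa using this
  calc fsq (D * Λ) = fsq ((D * S) * S) := by rw [h1]
    _ ≤ fsq (D * S) * fsq S := fsq_mul_le _ _
    _ = (Matrix.trace (Dᴴ * D * Λ)).re * (Matrix.trace Λ).re := by rw [h2, h3]

end NPDo

/-- Theorem 4.1(b): at an accumulation point `(P_{*1},…,P_{*m})` of the
Gauss–Seidel NPDo iteration (with `P^{(j+1)} → P̂_*` along the same subsequence for the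
first `m−1` modes), each `ℋ̂_{*ℓ}` admits `P_{*ℓ}` as orthonormal polar factor; if moreover
`P̂_{*ℓ} = P_{*ℓ}` for `1 ≤ ℓ ≤ m−1`, then the KKT condition holds at `(P_{*1},…,P_{*m})`. -/
theorem stmt_12 (m t : ℕ) (hm : 1 ≤ m) (ht : 1 ≤ t)
    (n : Fin m → ℕ) (hn : ∀ ℓ, 1 ≤ n ℓ)
    (κ : Fin m → Fin t → ℕ) (hκ : ∀ ℓ s, 1 ≤ κ ℓ s)
    (hkn : ∀ ℓ, (∑ s, κ ℓ s) ≤ n ℓ)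
    (B : (∀ ℓ, Fin (n ℓ)) → ℂ)
    (P : ℕ → ∀ ℓ, Matrix (Fin (n ℓ)) ((s : Fin t) × Fin (κ ℓ s)) ℂ)
    (horth : ∀ j ℓ, (P j ℓ)ᴴ * P j ℓ = 1)
    (hatH : ∀ j : ℕ, ∀ ℓ : Fin m, Matrix (Fin (n ℓ)) ((s : Fin t) × Fin (κ ℓ s)) ℂ)
    (hhatH : ∀ j ℓ, hatH j ℓ = scrH B (fun r => if r < ℓ then P (j + 1) r else P j r) ℓ)
    (hGS : ∀ j ℓ, ∃ Λ : Matrix ((s : Fin t) × Fin (κ ℓ s)) ((s : Fin t) × Fin (κ ℓ s)) ℂ,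
      Λ.PosSemidef ∧ hatH j ℓ = P (j + 1) ℓ * Λ)
    (Pstar Phat : ∀ ℓ, Matrix (Fin (n ℓ)) ((s : Fin t) × Fin (κ ℓ s)) ℂ)
    (I : Set ℕ) (hI : I.Infinite)
    (hconv : ∀ ℓ, Tendsto (fun j => frobNorm (P j ℓ - Pstar ℓ)) (atTop ⊓ 𝓟 I) (𝓝 0))
    (hconv' : ∀ ℓ : Fin m, (ℓ : ℕ) + 1 < m →
      Tendsto (fun j => frobNorm (P (j + 1) ℓ - Phat ℓ)) (atTop ⊓ 𝓟 I) (𝓝 0))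
    (hatHstar : ∀ ℓ : Fin m, Matrix (Fin (n ℓ)) ((s : Fin t) × Fin (κ ℓ s)) ℂ)
    (hhatHstar : ∀ ℓ, hatHstar ℓ = scrH B (fun r => if r < ℓ then Phat r else Pstar r) ℓ) :
    (∀ ℓ : Fin m,
        hatHstar ℓ = Pstar ℓ * ((Pstar ℓ)ᴴ * hatHstar ℓ) ∧
        ((Pstar ℓ)ᴴ * hatHstar ℓ).PosSemidef) ∧
      ((∀ ℓ : Fin m, (ℓ : ℕ) + 1 < m → Phat ℓ = Pstar ℓ) →
        ∀ ℓ : Fin m,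
          scrH B Pstar ℓ = Pstar ℓ * ((Pstar ℓ)ᴴ * scrH B Pstar ℓ) ∧
          ((Pstar ℓ)ᴴ * scrH B Pstar ℓ).PosSemidef) := by
  classical
  -- the PSD factors of the polar decompositions
  set Λm : ∀ _ : ℕ, ∀ ℓ : Fin m,
      Matrix ((s : Fin t) × Fin (κ ℓ s)) ((s : Fin t) × Fin (κ ℓ s)) ℂ :=
    fun j ℓ => (P (j + 1) ℓ)ᴴ * hatH j ℓ with hΛm
  have hΛprop : ∀ j ℓ, (Λm j ℓ).PosSemidef ∧ hatH j ℓ = P (j + 1) ℓ * Λm j ℓ := by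
    intro j ℓ
    obtain ⟨Λ', hps, hpol⟩ := hGS j ℓ
    have he : Λm j ℓ = Λ' := by
      rw [hΛm]
      dsimp only
      rw [hpol, ← Matrix.mul_assoc, horth (j + 1) ℓ, Matrix.one_mul]
    rw [he]
    exact ⟨hps, hpol⟩
  -- the stage tuples of the Gauss–Seidel sweep
  set T : ℕ → ℕ → ∀ r : Fin m, Matrix (Fin (n r)) ((s : Fin t) × Fin (κ r s)) ℂ :=
    fun j c r => if (r : ℕ) < c then P (j + 1) r else P j r with hTdef
  have hT0 : ∀ j, T j 0 = P j := by
    intro j; funext r; simp [hTdef]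
  have hTm : ∀ j c, m ≤ c → T j c = P (j + 1) := by
    intro j c hc; funext r; simp only [hTdef]
    exact if_pos (lt_of_lt_of_le r.isLt hc)
  have hTtuple : ∀ j (ℓ : Fin m),
      (fun r => if r < ℓ then P (j + 1) r else P j r) = T j (ℓ : ℕ) := by
    intro j ℓ; funext r; simp only [hTdef]
    by_cases h : r < ℓ
    · rw [if_pos h, if_pos (show (r : ℕ) < (ℓ : ℕ) from h)]
    · rw [if_neg h, if_neg (show ¬(r : ℕ) < (ℓ : ℕ) from h)]
  have hTstage : ∀ j (ℓ : Fin m),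
      T j ((ℓ : ℕ) + 1) = Function.update (T j (ℓ : ℕ)) ℓ (P (j + 1) ℓ) := by
    intro j ℓ; funext r
    by_cases hr : r = ℓ
    · subst hr
      rw [Function.update_self]
      simp only [hTdef]
      exact if_pos (Nat.lt_succ_self _)
    · rw [Function.update_of_ne hr]
      simp only [hTdef]
      have hiff : ((r : ℕ) < (ℓ : ℕ) + 1) ↔ ((r : ℕ) < (ℓ : ℕ)) := by
        constructor
        · intro h
          rcases Nat.lt_succ_iff_lt_or_eq.mp h with h | h
          · exact h
          · exact absurd (Fin.ext h) hr
        · exact fun h => Nat.lt_succ_of_lt h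
      by_cases h2 : (r : ℕ) < (ℓ : ℕ)
      · rw [if_pos (hiff.mpr h2), if_pos h2]
      · rw [if_neg (fun hh => h2 (hiff.mp hh)), if_neg h2]
  have hTℓ : ∀ j (ℓ : Fin m), T j (ℓ : ℕ) ℓ = P j ℓ := by
    intro j ℓ; simp only [hTdef]
    exact if_neg (lt_irrefl _)
  have hscrHT : ∀ j (ℓ : Fin m), scrH B (T j (ℓ : ℕ)) ℓ = P (j + 1) ℓ * Λm j ℓ := by
    intro j ℓ
    rw [← hTtuple j ℓ, ← hhatH j ℓ]
    exact (hΛprop j ℓ).2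
  -- the per-stage increment estimates
  have hinc : ∀ j (ℓ : Fin m),
      (Matrix.trace ((P (j + 1) ℓ - P j ℓ)ᴴ * (P (j + 1) ℓ - P j ℓ) * Λm j ℓ)).re
          ≤ 2 * (fObj B (T j ((ℓ : ℕ) + 1)) - fObj B (T j (ℓ : ℕ)))
        ∧ 0 ≤ (Matrix.trace ((P (j + 1) ℓ - P j ℓ)ᴴ * (P (j + 1) ℓ - P j ℓ) * Λm j ℓ)).re
        ∧ fObj B (T j (ℓ : ℕ)) ≤ fObj B (T j ((ℓ : ℕ) + 1)) := by
    intro j ℓ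
    have h := NPDo.increment hm B (T j (ℓ : ℕ)) ℓ (P (j + 1) ℓ)
      (by rw [hTℓ j ℓ]; exact horth j ℓ)
      (horth (j + 1) ℓ) (Λm j ℓ) (hΛprop j ℓ).1 (hscrHT j ℓ)
    rw [hTℓ j ℓ, ← hTstage j ℓ] at h
    exact h
  -- stagewise monotonicity
  have hstageMono : ∀ j, Monotone (fun c => fObj B (T j c)) := by
    intro j
    refine monotone_nat_of_le_succ fun c => ?_
    by_cases hc : c < m
    · have h := (hinc j ⟨c, hc⟩).2.2
      simpa using h
    · have he : T j (c + 1) = T j c := by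
        funext r; simp only [hTdef]
        have h1 : (r : ℕ) < c := by have := r.isLt; omega
        rw [if_pos (Nat.lt_succ_of_lt h1), if_pos h1]
      rw [he]
  have hgmono : Monotone (fun j => fObj B (P j)) := by
    refine monotone_nat_of_le_succ fun j => ?_
    calc fObj B (P j) = fObj B (T j 0) := by rw [hT0]
      _ ≤ fObj B (T j m) := hstageMono j (Nat.zero_le m)
      _ = fObj B (P (j + 1)) := by rw [hTm j m le_rfl]
  -- convergence of the objective values
  obtain ⟨L, hL⟩ : ∃ L, Tendsto (fun j => fObj B (P j)) atTop (𝓝 L) :=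
    ⟨_, tendsto_atTop_ciSup hgmono ⟨∑ jj : ∀ r : Fin m, Fin (n r), Complex.normSq (B jj),
      by rintro x ⟨j, rfl⟩; exact NPDo.fObj_le_bound B (P j) (horth j)⟩⟩
  have hdiff0 : Tendsto (fun j => fObj B (P (j + 1)) - fObj B (P j)) atTop (𝓝 0) := by
    have h1 : Tendsto (fun j => fObj B (P (j + 1))) atTop (𝓝 L) :=
      hL.comp (tendsto_add_atTop_nat 1)
    simpa using h1.sub hL
  -- Part 1: the polar limit property at the accumulation point
  have part1 : ∀ ℓ : Fin m, hatHstar ℓ = Pstar ℓ * ((Pstar ℓ)ᴴ * hatHstar ℓ)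
      ∧ ((Pstar ℓ)ᴴ * hatHstar ℓ).PosSemidef := by
    intro ℓ
    have hFne : (atTop ⊓ 𝓟 I).NeBot := by
      refine Filter.inf_principal_neBot_iff.mpr fun U hU => ?_
      obtain ⟨a, ha⟩ := Filter.mem_atTop_sets.mp hU
      obtain ⟨b, hbI, hba⟩ := hI.exists_gt a
      exact ⟨b, ha b (le_of_lt hba), hbI⟩
    set D : ℕ → Matrix (Fin (n ℓ)) ((s : Fin t) × Fin (κ ℓ s)) ℂ :=
      fun j => P (j + 1) ℓ - P j ℓ with hDdef
    have hε0 : Tendsto (fun j => (Matrix.trace ((D j)ᴴ * D j * Λm j ℓ)).re) atTop (𝓝 0) := by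
      have hub : ∀ j, (Matrix.trace ((D j)ᴴ * D j * Λm j ℓ)).re
          ≤ 2 * (fObj B (P (j + 1)) - fObj B (P j)) := by
        intro j
        have h1 := (hinc j ℓ).1
        have h2 : fObj B (T j ((ℓ : ℕ) + 1)) ≤ fObj B (P (j + 1)) := by
          rw [← hTm j m le_rfl]
          exact hstageMono j (by have := ℓ.isLt; omega)
        have h3 : fObj B (P j) ≤ fObj B (T j (ℓ : ℕ)) := by
          rw [← hT0 j]
          exact hstageMono j (Nat.zero_le _)
        simp only [hDdef]
        linarith
      have hlb : ∀ j, 0 ≤ (Matrix.trace ((D j)ᴴ * D j * Λm j ℓ)).re := by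
        intro j
        have := (hinc j ℓ).2.1
        simpa only [hDdef] using this
      have hmul : Tendsto (fun j => 2 * (fObj B (P (j + 1)) - fObj B (P j))) atTop (𝓝 0) := by
        simpa using hdiff0.const_mul 2
      exact tendsto_of_tendsto_of_tendsto_of_le_of_le tendsto_const_nhds hmul hlb hub
    have hεF : Tendsto (fun j => (Matrix.trace ((D j)ᴴ * D j * Λm j ℓ)).re)
        (atTop ⊓ 𝓟 I) (𝓝 0) := hε0.mono_left inf_le_left
    -- entrywise limits
    have hPent : ∀ (r : Fin m) a c,
        Tendsto (fun j => P j r a c) (atTop ⊓ 𝓟 I) (𝓝 (Pstar r a c)) :=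
      fun r => NPDo.tendsto_entry (hconv r)
    have hTent : ∀ (r : Fin m) a c, Tendsto (fun j => T j (ℓ : ℕ) r a c) (atTop ⊓ 𝓟 I)
        (𝓝 ((if r < ℓ then Phat r else Pstar r) a c)) := by
      intro r a c
      simp only [hTdef]
      by_cases h : r < ℓ
      · have h' : (r : ℕ) < (ℓ : ℕ) := h
        simp only [if_pos h', if_pos h]
        refine NPDo.tendsto_entry (hconv' r ?_) a c
        have := ℓ.isLt
        omega
      · have h' : ¬(r : ℕ) < (ℓ : ℕ) := h
        simp only [if_neg h', if_neg h]
        exact hPent r a c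
    have hHent : ∀ a sc,
        Tendsto (fun j => hatH j ℓ a sc) (atTop ⊓ 𝓟 I) (𝓝 (hatHstar ℓ a sc)) := by
      intro a sc
      have he : ∀ j, hatH j ℓ = scrH B (T j (ℓ : ℕ)) ℓ := fun j => by
        rw [hhatH j ℓ, hTtuple j ℓ]
      simp only [he]
      rw [hhatHstar ℓ]
      exact NPDo.scrH_tendsto B (fun j => T j (ℓ : ℕ))
        (fun r => if r < ℓ then Phat r else Pstar r) hTent ℓ a sc
    -- trace bounds
    have hQfsq : ∀ j : ℕ,
        NPDo.fsq (P (j + 1) ℓ) = (Fintype.card ((s : Fin t) × Fin (κ ℓ s)) : ℝ) := by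
      intro j
      have h1 := NPDo.trace_conjTranspose_mul_self (P (j + 1) ℓ)
      rw [horth (j + 1) ℓ, Matrix.trace_one] at h1
      have := congrArg Complex.re h1.symm
      simpa using this
    have hbound : ∀ j, (Matrix.trace (Λm j ℓ)).re
        ≤ Real.sqrt (Fintype.card ((s : Fin t) × Fin (κ ℓ s)) : ℝ)
          * Real.sqrt (NPDo.fsq (hatH j ℓ)) := by
      intro j
      have h := NPDo.trace_re_le_sqrt (P (j + 1) ℓ) (hatH j ℓ)
      rw [hQfsq j] at h
      simp only [hΛm]
      exact h
    have hfsqH : Tendsto (fun j => NPDo.fsq (hatH j ℓ)) (atTop ⊓ 𝓟 I)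
        (𝓝 (NPDo.fsq (hatHstar ℓ))) := by
      unfold NPDo.fsq
      refine tendsto_finset_sum _ fun a _ => tendsto_finset_sum _ fun sc _ => ?_
      have heq : (fun j => Complex.normSq (hatH j ℓ a sc))
          = fun j => ‖hatH j ℓ a sc‖ ^ 2 := by
        funext j
        rw [← Complex.sq_norm]
      rw [heq, ← Complex.sq_norm (hatHstar ℓ a sc)]
      exact (hHent a sc).norm.pow 2
    have hDL : Tendsto (fun j => NPDo.fsq (D j * Λm j ℓ)) (atTop ⊓ 𝓟 I) (𝓝 0) := by
      have hub : ∀ j, NPDo.fsq (D j * Λm j ℓ)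
          ≤ (Matrix.trace ((D j)ᴴ * D j * Λm j ℓ)).re
            * (Real.sqrt (Fintype.card ((s : Fin t) × Fin (κ ℓ s)) : ℝ)
              * Real.sqrt (NPDo.fsq (hatH j ℓ))) := by
        intro j
        refine (NPDo.fsq_mul_psd_le (hΛprop j ℓ).1 (D j)).trans ?_
        refine mul_le_mul_of_nonneg_left (hbound j) ?_
        have := (hinc j ℓ).2.1
        simpa only [hDdef] using this
      have hmul : Tendsto (fun j => (Matrix.trace ((D j)ᴴ * D j * Λm j ℓ)).re
          * (Real.sqrt (Fintype.card ((s : Fin t) × Fin (κ ℓ s)) : ℝ)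
            * Real.sqrt (NPDo.fsq (hatH j ℓ)))) (atTop ⊓ 𝓟 I) (𝓝 0) := by
        have hs : Tendsto (fun j => Real.sqrt (Fintype.card ((s : Fin t) × Fin (κ ℓ s)) : ℝ)
            * Real.sqrt (NPDo.fsq (hatH j ℓ))) (atTop ⊓ 𝓟 I)
            (𝓝 (Real.sqrt (Fintype.card ((s : Fin t) × Fin (κ ℓ s)) : ℝ)
              * Real.sqrt (NPDo.fsq (hatHstar ℓ)))) :=
          tendsto_const_nhds.mul ((Real.continuous_sqrt.tendsto _).comp hfsqH)
        simpa using hεF.mul hs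
      exact tendsto_of_tendsto_of_tendsto_of_le_of_le tendsto_const_nhds hmul
        (fun j => NPDo.fsq_nonneg _) hub
    have hDLent : ∀ a sc, Tendsto (fun j => (D j * Λm j ℓ) a sc) (atTop ⊓ 𝓟 I) (𝓝 0) :=
      NPDo.sqrt_fsq_tendsto_zero hDL
    have hMent : ∀ sc sc', Tendsto (fun j => ((P j ℓ)ᴴ * hatH j ℓ) sc sc') (atTop ⊓ 𝓟 I)
        (𝓝 (((Pstar ℓ)ᴴ * hatHstar ℓ) sc sc')) := by
      intro sc sc'
      simp only [Matrix.mul_apply, Matrix.conjTranspose_apply]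
      exact tendsto_finset_sum _ fun a _ => ((hPent ℓ a sc).star.mul (hHent a sc'))
    have hdecomp : ∀ j, Λm j ℓ = (P j ℓ)ᴴ * hatH j ℓ - (P j ℓ)ᴴ * (D j * Λm j ℓ) := by
      intro j
      have hQd : P (j + 1) ℓ = P j ℓ + D j := by simp [hDdef]
      have h1 : (P j ℓ)ᴴ * hatH j ℓ = Λm j ℓ + (P j ℓ)ᴴ * (D j * Λm j ℓ) := by
        conv_lhs => rw [(hΛprop j ℓ).2, hQd]
        rw [Matrix.add_mul, Matrix.mul_add, ← Matrix.mul_assoc, horth j ℓ, Matrix.one_mul]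
      rw [h1]
      abel
    have hPDent : ∀ sc sc', Tendsto (fun j => ((P j ℓ)ᴴ * (D j * Λm j ℓ)) sc sc')
        (atTop ⊓ 𝓟 I) (𝓝 0) := by
      intro sc sc'
      simp only [Matrix.mul_apply, Matrix.conjTranspose_apply]
      have := tendsto_finset_sum (Finset.univ)
        (fun (a : Fin (n ℓ)) _ => ((hPent ℓ a sc).star.mul (hDLent a sc')))
      simpa [Matrix.mul_apply] using this
    have hΛent : ∀ sc sc', Tendsto (fun j => Λm j ℓ sc sc') (atTop ⊓ 𝓟 I)
        (𝓝 (((Pstar ℓ)ᴴ * hatHstar ℓ) sc sc')) := by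
      intro sc sc'
      have he : ∀ j, Λm j ℓ sc sc'
          = ((P j ℓ)ᴴ * hatH j ℓ) sc sc' - ((P j ℓ)ᴴ * (D j * Λm j ℓ)) sc sc' := by
        intro j
        conv_lhs => rw [hdecomp j]
        rw [Matrix.sub_apply]
      simp only [he]
      simpa using (hMent sc sc').sub (hPDent sc sc')
    have hfinal : hatHstar ℓ = Pstar ℓ * ((Pstar ℓ)ᴴ * hatHstar ℓ) := by
      ext a sc'
      refine tendsto_nhds_unique (hHent a sc') ?_
      have he : ∀ j, hatH j ℓ a sc' = (P j ℓ * Λm j ℓ) a sc' + (D j * Λm j ℓ) a sc' := by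
        intro j
        conv_lhs => rw [(hΛprop j ℓ).2]
        have hQd : P (j + 1) ℓ = P j ℓ + D j := by simp [hDdef]
        rw [hQd, Matrix.add_mul, Matrix.add_apply]
      simp only [he]
      have h1 : Tendsto (fun j => (P j ℓ * Λm j ℓ) a sc') (atTop ⊓ 𝓟 I)
          (𝓝 ((Pstar ℓ * ((Pstar ℓ)ᴴ * hatHstar ℓ)) a sc')) := by
        simp only [Matrix.mul_apply]
        exact tendsto_finset_sum _ fun sc _ => (hPent ℓ a sc).mul (hΛent sc sc')
      simpa using h1.add (hDLent a sc')
    have hherm : ((Pstar ℓ)ᴴ * hatHstar ℓ)ᴴ = (Pstar ℓ)ᴴ * hatHstar ℓ := by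
      ext sc sc'
      rw [Matrix.conjTranspose_apply]
      refine tendsto_nhds_unique ?_ (hΛent sc sc')
      have he : ∀ j, star (Λm j ℓ sc' sc) = Λm j ℓ sc sc' := by
        intro j
        have hh := (hΛprop j ℓ).1.isHermitian
        have h2 : (Λm j ℓ)ᴴ sc sc' = Λm j ℓ sc sc' := by rw [hh]
        rw [Matrix.conjTranspose_apply] at h2
        exact h2
      simp only [← he]
      exact (hΛent sc' sc).star
    have hpsd : ((Pstar ℓ)ᴴ * hatHstar ℓ).PosSemidef := by
      refine Matrix.PosSemidef.of_dotProduct_mulVec_nonneg hherm fun x => ?_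
      have hq : ∀ j, 0 ≤ star x ⬝ᵥ Λm j ℓ *ᵥ x := fun j => (hΛprop j ℓ).1.dotProduct_mulVec_nonneg x
      have hqt : Tendsto (fun j => star x ⬝ᵥ Λm j ℓ *ᵥ x) (atTop ⊓ 𝓟 I)
          (𝓝 (star x ⬝ᵥ ((Pstar ℓ)ᴴ * hatHstar ℓ) *ᵥ x)) := by
        simp only [dotProduct, Matrix.mulVec, Pi.star_apply]
        refine tendsto_finset_sum _ fun sc _ => ?_
        exact tendsto_const_nhds.mul
          (tendsto_finset_sum _ fun sc' _ => (hΛent sc sc').mul tendsto_const_nhds)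
      rw [Complex.le_def]
      constructor
      · have hre := (Complex.continuous_re.tendsto _).comp hqt
        have hlb : ∀ j, (0 : ℝ) ≤ (star x ⬝ᵥ Λm j ℓ *ᵥ x).re := fun j => by
          simpa using (Complex.le_def.mp (hq j)).1
        have := ge_of_tendsto hre (Filter.Eventually.of_forall hlb)
        simpa using this
      · have him := (Complex.continuous_im.tendsto _).comp hqt
        have hz : ∀ j, (star x ⬝ᵥ Λm j ℓ *ᵥ x).im = 0 := fun j => by
          have := (Complex.le_def.mp (hq j)).2
          simpa using this.symm
        have hconst : Tendsto (fun j => (star x ⬝ᵥ Λm j ℓ *ᵥ x).im) (atTop ⊓ 𝓟 I) (𝓝 0) := by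
          simp only [hz]
          exact tendsto_const_nhds
        have := tendsto_nhds_unique him hconst
        simpa using this.symm
    exact ⟨hfinal, hpsd⟩
  refine ⟨part1, ?_⟩
  intro hPP ℓ
  have htup : (fun r => if r < ℓ then Phat r else Pstar r) = Pstar := by
    funext r
    by_cases h : r < ℓ
    · rw [if_pos h]
      refine hPP r ?_
      have h1 : (r : ℕ) < (ℓ : ℕ) := h
      have := ℓ.isLt
      omega
    · rw [if_neg h]
  have hp := part1 ℓ
  rwa [hhatHstar ℓ, htup] at hp
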